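/- arXiv:2101.09514 — 2 statements merged into one kernel-verified Lean document; each statement's English description precedes it below -/
import Mathlib

section
/- With notation as above, the relative bias satisfies $(\alpha - \alpha_1)/\alpha \le N \, \Phi(\log(\delta\gamma/N)) (\Phi(\log\gamma))^{N-1} / (\Phi(\log(\gamma/N)))^N$. Consequently, choosing $\delta = (N/\gamma)\exp(\Phi^{-1}(\tfrac{\epsilon}{2N}(\Phi(\log(\gamma/N)))^N/(\Phi(\log\gamma))^{N-1}))$ ensures $(\alpha-\alpha_1)/\alpha \le \epsilon/2$. -/
/-!
Write `A = {∑ Xᵢ ≤ γ}` and `c = δγ/N`. Since the `Xᵢ` are positive, on `A ∩ {Xᵢ ≤ c}` every other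
`Xⱼ` is at most `γ`, so by independence and a union bound `α - α₁ = ℙ(A \ {∀ i, c < Xᵢ})` is at most
`N Φ(log c) Φ(log γ)^(N-1)`. On the other hand `A ⊇ {∀ i, Xᵢ ≤ γ/N}`, so `α ≥ Φ(log(γ/N))^N`.
-/

open MeasureTheory ProbabilityTheory

/-- `Φ` is the standard normal CDF. -/
noncomputable def Phi (x : ℝ) : ℝ := (ProbabilityTheory.gaussianReal 0 1 (Set.Iic x)).toReal

lemma Phi_pos (x : ℝ) : 0 < Phi x := by
  refine ENNReal.toReal_pos (fun h => ?_) (measure_ne_top _ _)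
  have := gaussianReal_absolutelyContinuous' 0 one_ne_zero h
  simp [Real.volume_Iic] at this

section Independent

variable {Ω ι : Type*} [MeasurableSpace Ω] {μ : Measure Ω} [Fintype ι]
  {X : ι → Ω → ℝ}

lemma ProbabilityTheory.iIndepFun.measureReal_iInter_preimage (hind : iIndepFun X μ)
    {s : ι → Set ℝ} (hs : ∀ i, MeasurableSet (s i)) :
    μ.real (⋂ i, X i ⁻¹' s i) = ∏ i, μ.real (X i ⁻¹' s i) := by
  rw [Measure.real, hind.meas_iInter fun i => ⟨s i, hs i, rfl⟩, ENNReal.toReal_prod]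
  rfl

variable [IsFiniteMeasure μ]

lemma prod_measureReal_le_le_measureReal_sum_le (hind : iIndepFun X μ) (t : ι → ℝ) :
    ∏ i, μ.real {ω | X i ω ≤ t i} ≤ μ.real {ω | ∑ i, X i ω ≤ ∑ i, t i} := by
  calc _ = μ.real (⋂ i, X i ⁻¹' Set.Iic (t i)) :=
        (hind.measureReal_iInter_preimage fun i => measurableSet_Iic).symm
    _ ≤ μ.real {ω | ∑ i, X i ω ≤ ∑ i, t i} :=
        measureReal_mono fun ω hω =>
          show ∑ i, X i ω ≤ ∑ i, t i from Finset.sum_le_sum fun i _ => Set.mem_iInter.1 hω i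

lemma measureReal_sum_le_inter_le_le_mul_prod [DecidableEq ι] (hind : iIndepFun X μ)
    (h0 : ∀ i, 0 ≤ᵐ[μ] X i) (i : ι) (c γ : ℝ) :
    μ.real ({ω | ∑ j, X j ω ≤ γ} ∩ {ω | X i ω ≤ c} : Set Ω)
      ≤ μ.real {ω | X i ω ≤ c} * ∏ j ∈ Finset.univ.erase i, μ.real {ω | X j ω ≤ γ} := by
  set s : ι → Set ℝ := Function.update (fun _ => Set.Iic γ) i (Set.Iic c)
  have hs (j : ι) : MeasurableSet (s j) := by
    by_cases hj : j = i <;> simp [s, hj]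
  have hsub : ({ω | ∑ j, X j ω ≤ γ} ∩ {ω | X i ω ≤ c} : Set Ω) ≤ᵐ[μ] ⋂ j, X j ⁻¹' s j := by
    filter_upwards [ae_all_iff.2 h0] with ω hω ⟨hsum, hi⟩
    refine Set.mem_iInter.2 fun j => ?_
    by_cases hj : j = i
    · subst hj; simpa [s] using hi
    · have : X j ω ≤ ∑ k, X k ω :=
        Finset.single_le_sum (fun k _ => hω k) (Finset.mem_univ j)
      simpa [s, hj] using this.trans hsum
  calc _ ≤ μ.real (⋂ j, X j ⁻¹' s j) :=
        ENNReal.toReal_mono (measure_ne_top _ _) (measure_mono_ae hsub)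
    _ = _ := by
      rw [hind.measureReal_iInter_preimage hs, ← Finset.mul_prod_erase _ _ (Finset.mem_univ i)]
      refine congrArg₂ _ (by simp only [s, Function.update_self]; rfl)
        (Finset.prod_congr rfl fun j hj => ?_)
      simp only [s, Function.update_of_ne (Finset.ne_of_mem_erase hj)]
      rfl

lemma measureReal_sum_le_sub_forall_lt_le [DecidableEq ι] (hind : iIndepFun X μ)
    (hmeas : ∀ i, Measurable (X i)) (h0 : ∀ i, 0 ≤ᵐ[μ] X i) (c γ : ℝ) :
    μ.real {ω | ∑ i, X i ω ≤ γ} - μ.real {ω | ∑ i, X i ω ≤ γ ∧ ∀ i, c < X i ω}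
      ≤ ∑ i, μ.real {ω | X i ω ≤ c} * ∏ j ∈ Finset.univ.erase i, μ.real {ω | X j ω ≤ γ} := by
  set A := {ω | ∑ i, X i ω ≤ γ}
  set B := {ω | ∀ i, c < X i ω}
  have hB : MeasurableSet B := by
    simp only [B, Set.ofPred_forall]
    exact .iInter fun i => measurableSet_lt measurable_const (hmeas i)
  have hdiff : A \ B ⊆ ⋃ i, A ∩ {ω | X i ω ≤ c} := by
    rintro ω ⟨hA, hB⟩
    obtain ⟨i, hi⟩ := not_forall.1 hB
    exact Set.mem_iUnion.2 ⟨i, hA, not_lt.1 hi⟩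
  calc _ = μ.real (A \ B) := by
        rw [← measureReal_inter_add_sdiff (s := A) hB]; exact add_sub_cancel_left _ _
    _ ≤ ∑ i, μ.real (A ∩ {ω | X i ω ≤ c}) :=
        (measureReal_mono hdiff).trans (measureReal_iUnion_fintype_le _)
    _ ≤ _ := Finset.sum_le_sum fun i _ => measureReal_sum_le_inter_le_le_mul_prod hind h0 i c γ

end Independent

section LogNormal

variable {Ω : Type*} [MeasurableSpace Ω] {μ : Measure Ω} {Y : Ω → ℝ}

lemma measureReal_le_eq_Phi_log (hY : Measurable Y)
    (hlaw : μ.map Y = (gaussianReal 0 1).map Real.exp) {t : ℝ} (ht : 0 < t) :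
    μ.real {ω | Y ω ≤ t} = Phi (Real.log t) := by
  have hpre : Real.exp ⁻¹' Set.Iic t = Set.Iic (Real.log t) := by
    ext x; simp [Real.le_log_iff_exp_le ht]
  change μ.real (Y ⁻¹' Set.Iic t) = _
  rw [← map_measureReal_apply hY measurableSet_Iic, hlaw,
    map_measureReal_apply Real.measurable_exp measurableSet_Iic, hpre]
  rfl

lemma ae_nonneg_of_map_eq_map_exp (hY : Measurable Y)
    (hlaw : μ.map Y = (gaussianReal 0 1).map Real.exp) : 0 ≤ᵐ[μ] Y := by
  refine ae_of_ae_map hY.aemeasurable (p := fun y => 0 ≤ y) ?_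
  rw [hlaw]
  exact (ae_map_iff Real.measurable_exp.aemeasurable measurableSet_Ici).2
    (ae_of_all _ fun x => (Real.exp_pos x).le)

end LogNormal

theorem stmt_9_general {Ω : Type*} [MeasureSpace Ω] [IsProbabilityMeasure (ℙ : Measure Ω)]
    (N : ℕ) (hN : 0 < N) (γ δ ε : ℝ) (hγ : 0 < γ) (hδ0 : 0 < δ)
    (X : Fin N → Ω → ℝ) (hmeas : ∀ i, Measurable (X i))
    (hind : iIndepFun X ℙ)
    (hlaw : ∀ i, Measure.map (X i) ℙ = Measure.map Real.exp (gaussianReal 0 1))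
    (α α₁ : ℝ)
    (hα : α = (ℙ {ω | ∑ i, X i ω ≤ γ}).toReal)
    (hα₁ : α₁ = (ℙ {ω | ∑ i, X i ω ≤ γ ∧ ∀ i, δ * γ / N < X i ω}).toReal) :
    (α - α₁) / α
        ≤ N * Phi (Real.log (δ * γ / N)) * (Phi (Real.log γ)) ^ (N - 1)
            / (Phi (Real.log (γ / N))) ^ N ∧
    (Phi (Real.log (δ * γ / N))
        = ε / (2 * N) * (Phi (Real.log (γ / N))) ^ N / (Phi (Real.log γ)) ^ (N - 1)
      → (α - α₁) / α ≤ ε / 2) := by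
  have hN' : (0 : ℝ) < N := Nat.cast_pos.2 hN
  have hcdf (i : Fin N) {t : ℝ} (ht : 0 < t) :
      (ℙ : Measure Ω).real {ω | X i ω ≤ t} = Phi (Real.log t) :=
    measureReal_le_eq_Phi_log (hmeas i) (hlaw i) ht
  have hlower : Phi (Real.log (γ / N)) ^ N ≤ α := by
    have h := prod_measureReal_le_le_measureReal_sum_le hind fun _ => γ / N
    simp only [hcdf _ (div_pos hγ hN'), Finset.prod_const, Finset.sum_const, Finset.card_univ,
      Fintype.card_fin, nsmul_eq_mul, mul_div_cancel₀ γ hN'.ne'] at h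
    rw [hα]
    exact h
  have hgap : α - α₁ ≤ N * Phi (Real.log (δ * γ / N)) * Phi (Real.log γ) ^ (N - 1) := by
    have h := measureReal_sum_le_sub_forall_lt_le hind hmeas
      (fun i => ae_nonneg_of_map_eq_map_exp (hmeas i) (hlaw i)) (δ * γ / N) γ
    simp only [hcdf _ (div_pos (mul_pos hδ0 hγ) hN'), hcdf _ hγ, Finset.prod_const,
      Finset.card_erase_of_mem (Finset.mem_univ _), Finset.card_univ, Fintype.card_fin,
      Finset.sum_const, nsmul_eq_mul] at h
    rw [hα, hα₁, mul_assoc]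
    exact h
  have hnum : 0 ≤ N * Phi (Real.log (δ * γ / N)) * Phi (Real.log γ) ^ (N - 1) := by
    have := Phi_pos (Real.log (δ * γ / N)); have := Phi_pos (Real.log γ); positivity
  have hbound := div_le_div₀ hnum hgap (pow_pos (Phi_pos _) N) hlower
  refine ⟨hbound, fun hchoice => hbound.trans_eq ?_⟩
  have := (pow_pos (Phi_pos (Real.log γ)) (N - 1)).ne'
  have := (pow_pos (Phi_pos (Real.log (γ / N))) N).ne'
  rw [hchoice]
  field_simp

theorem stmt_9 {Ω : Type*} [MeasureSpace Ω] [IsProbabilityMeasure (ℙ : Measure Ω)]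
    (N : ℕ) (hN : 0 < N) (γ δ ε : ℝ) (hγ : 0 < γ) (hδ0 : 0 < δ) (hδ1 : δ < 1) (hε : 0 < ε)
    (X : Fin N → Ω → ℝ) (hmeas : ∀ i, Measurable (X i))
    (hind : iIndepFun X ℙ)
    (hlaw : ∀ i, Measure.map (X i) ℙ = Measure.map Real.exp (gaussianReal 0 1))
    (α α₁ : ℝ)
    (hα : α = (ℙ {ω | ∑ i, X i ω ≤ γ}).toReal)
    (hα₁ : α₁ = (ℙ {ω | ∑ i, X i ω ≤ γ ∧ ∀ i, δ * γ / N < X i ω}).toReal) :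
    (α - α₁) / α
        ≤ N * Phi (Real.log (δ * γ / N)) * (Phi (Real.log γ)) ^ (N - 1)
            / (Phi (Real.log (γ / N))) ^ N ∧
    (Phi (Real.log (δ * γ / N))
        = ε / (2 * N) * (Phi (Real.log (γ / N))) ^ N / (Phi (Real.log γ)) ^ (N - 1)
      → (α - α₁) / α ≤ ε / 2) :=
  stmt_9_general N hN γ δ ε hγ hδ0 X hmeas hind hlaw α α₁ hα hα₁
end

section
/- Let $\tilde f$ be the Gamma density with shape $k > 0$ and scale $\theta = \gamma/(Nk)$, let $f$ be the standard Log-normal density, and let $X_1,\dots,X_N$ be i.i.d. with density $\tilde f$. Define the likelihood ratio $\mathcal{L}(x_1,\dots,x_N) = \prod_i f(x_i)/\tilde f(x_i)$. Then $\mathbb{E}[\mathcal{L}^2(X_1,\dots,X_N)\mathbf{1}_{\{\sum X_i \le \gamma\}}] \le (\Gamma(k)\theta^k/\sqrt{2\pi})^{2N} \exp(2kN + k^2 N)$. -/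
/-!
Writing `f(x)/f̃(x) = A · exp(-(log x)²/2 - k log x + x/θ)` with `A = Γ(k) θ^k / √(2π)`, the square
of the likelihood ratio is `A^(2N) exp(∑ (-(log xᵢ)² - 2k log xᵢ) + 2 ∑ xᵢ / θ)`. Each
`-(log x)² - 2k log x` is at most `k²` (complete the square), and on `{∑ xᵢ ≤ γ}` the last term
is at most `2γ/θ = 2kN`. The bound is then integrated against a product of Gamma
distributions, a probability measure.
-/

open MeasureTheory Real

/-- The standard Log-normal density. -/
noncomputable def logNormalPdf (x : ℝ) : ℝ :=
  1 / (x * Real.sqrt (2 * Real.pi)) * Real.exp (-(Real.log x) ^ 2 / 2)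

/-- The Gamma density with shape `k` and scale `θ`. -/
noncomputable def gammaPdf (k θ x : ℝ) : ℝ :=
  x ^ (k - 1) * Real.exp (-x / θ) / (Real.Gamma k * θ ^ k)

open ProbabilityTheory

lemma logNormalPdf_div_gammaPdf {k θ x : ℝ} (hk : 0 < k) (hθ : 0 < θ) (hx : 0 < x) :
    logNormalPdf x / gammaPdf k θ x =
      Gamma k * θ ^ k / sqrt (2 * π) * exp (-log x ^ 2 / 2 - k * log x + x / θ) := by
  have hΓ : Gamma k ≠ 0 := (Gamma_pos_of_pos hk).ne'
  have hθk : θ ^ k ≠ 0 := (rpow_pos_of_pos hθ k).ne'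
  have hexp : exp (-log x ^ 2 / 2) =
      exp (-log x ^ 2 / 2 - k * log x + x / θ) * x * exp (log x * (k - 1)) * exp (-x / θ) := by
    calc exp (-log x ^ 2 / 2)
        = exp ((-log x ^ 2 / 2 - k * log x + x / θ) + log x + log x * (k - 1) + -x / θ) := by
          ring_nf
      _ = _ := by rw [exp_add, exp_add, exp_add, exp_log hx]
  unfold logNormalPdf gammaPdf
  rw [rpow_def_of_pos hx, hexp]
  field_simp

lemma sq_logNormalPdf_div_gammaPdf_le {k θ x : ℝ} (hk : 0 < k) (hθ : 0 < θ) (hx : 0 < x) :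
    (logNormalPdf x / gammaPdf k θ x) ^ 2 ≤
      (Gamma k * θ ^ k / sqrt (2 * π)) ^ 2 * exp (k ^ 2 + 2 * x / θ) := by
  have hsq : -log x ^ 2 - 2 * k * log x ≤ k ^ 2 := by nlinarith [sq_nonneg (log x + k)]
  rw [logNormalPdf_div_gammaPdf hk hθ hx, mul_pow, ← exp_nat_mul]
  gcongr
  push_cast
  linarith [mul_div_assoc 2 x θ]

lemma prod_sq_logNormalPdf_div_gammaPdf_le {ι : Type*} [Fintype ι] {k θ γ : ℝ} (hk : 0 < k)
    (hθ : 0 < θ) {x : ι → ℝ} (hx : ∀ i, 0 < x i) (hsum : ∑ i, x i ≤ γ) :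
    (∏ i, logNormalPdf (x i) / gammaPdf k θ (x i)) ^ 2 ≤
      (Gamma k * θ ^ k / sqrt (2 * π)) ^ (2 * Fintype.card ι) *
        exp (Fintype.card ι * k ^ 2 + 2 * γ / θ) := by
  set A := Gamma k * θ ^ k / sqrt (2 * π)
  calc (∏ i, logNormalPdf (x i) / gammaPdf k θ (x i)) ^ 2
      = ∏ i, (logNormalPdf (x i) / gammaPdf k θ (x i)) ^ 2 := (Finset.prod_pow _ _ _).symm
    _ ≤ ∏ i, A ^ 2 * exp (k ^ 2 + 2 * x i / θ) :=
        Finset.prod_le_prod (fun i _ => sq_nonneg _)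
          (fun i _ => sq_logNormalPdf_div_gammaPdf_le hk hθ (hx i))
    _ = A ^ (2 * Fintype.card ι) * exp (Fintype.card ι * k ^ 2 + 2 * (∑ i, x i) / θ) := by
        rw [Finset.prod_mul_distrib, Finset.prod_const, ← exp_sum, Finset.sum_add_distrib,
          ← pow_mul, Finset.sum_const, Finset.card_univ, nsmul_eq_mul, Finset.mul_sum,
          Finset.sum_div]
    _ ≤ A ^ (2 * Fintype.card ι) * exp (Fintype.card ι * k ^ 2 + 2 * γ / θ) := by
        gcongr

lemma gammaPdf_eq_gammaPDFReal {k θ x : ℝ} (hθ : 0 < θ) (hx : 0 ≤ x) :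
    gammaPdf k θ x = gammaPDFReal k θ⁻¹ x := by
  rw [gammaPDFReal, if_pos hx, gammaPdf, inv_rpow hθ.le, neg_div, ← inv_mul_eq_div]
  field_simp

lemma withDensity_gammaPdf_eq_gammaMeasure {k θ : ℝ} (hθ : 0 < θ) :
    (volume.restrict (Set.Ioi (0 : ℝ))).withDensity (fun x => ENNReal.ofReal (gammaPdf k θ x)) =
      gammaMeasure k θ⁻¹ := by
  rw [gammaMeasure, ← withDensity_indicator measurableSet_Ioi]
  refine withDensity_congr_ae ?_
  filter_upwards [Measure.ae_ne volume 0] with x hx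
  rcases hx.lt_or_gt with hneg | hpos
  · rw [Set.indicator_of_notMem (show x ∉ Set.Ioi 0 from not_lt.mpr hneg.le),
      gammaPDF_of_neg hneg]
  · rw [Set.indicator_of_mem (show x ∈ Set.Ioi 0 from hpos), gammaPDF,
      gammaPdf_eq_gammaPDFReal hθ hpos.le]

lemma integral_le_of_ae_norm_le {α : Type*} [MeasurableSpace α] {μ : Measure α}
    [IsProbabilityMeasure μ] {f : α → ℝ} {C : ℝ} (h : ∀ᵐ x ∂μ, ‖f x‖ ≤ C) :
    ∫ x, f x ∂μ ≤ C :=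
  (le_abs_self _).trans ((norm_integral_le_of_norm_le_const h).trans_eq (by simp))

theorem stmt_11 (N : ℕ) (hN : 0 < N) (γ k : ℝ) (hγ : 0 < γ) (hk : 0 < k)
    (θ : ℝ) (hθ : θ = γ / (N * k)) :
    ∫ x : Fin N → ℝ,
        Set.indicator {x : Fin N → ℝ | ∑ i, x i ≤ γ}
          (fun x => (∏ i, logNormalPdf (x i) / gammaPdf k θ (x i)) ^ 2) x
      ∂(Measure.pi fun _ : Fin N =>
          (volume.restrict (Set.Ioi (0 : ℝ))).withDensity
            (fun x => ENNReal.ofReal (gammaPdf k θ x)))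
      ≤ (Real.Gamma k * θ ^ k / Real.sqrt (2 * Real.pi)) ^ (2 * N)
          * Real.exp (2 * k * N + k ^ 2 * N) := by
  have hθpos : 0 < θ := by rw [hθ]; positivity
  have hγθ : 2 * γ / θ = 2 * k * N := by rw [hθ]; field_simp
  set ν := (volume.restrict (Set.Ioi (0 : ℝ))).withDensity
    (fun x => ENNReal.ofReal (gammaPdf k θ x))
  have : IsProbabilityMeasure ν := by
    rw [show ν = gammaMeasure k θ⁻¹ from withDensity_gammaPdf_eq_gammaMeasure hθpos]
    exact isProbabilityMeasure_gammaMeasure hk (inv_pos.mpr hθpos)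
  have hpos : ∀ᵐ x ∂Measure.pi fun _ : Fin N => ν, ∀ i, 0 < x i :=
    ae_all_iff.mpr fun i => Measure.tendsto_eval_ae_ae.eventually
      (withDensity_absolutelyContinuous _ _ (ae_restrict_mem measurableSet_Ioi))
  refine integral_le_of_ae_norm_le ?_
  filter_upwards [hpos] with x hx
  by_cases hxγ : x ∈ {x : Fin N → ℝ | ∑ i, x i ≤ γ}
  · rw [Set.indicator_of_mem hxγ, Real.norm_of_nonneg (sq_nonneg _)]
    convert prod_sq_logNormalPdf_div_gammaPdf_le hk hθpos hx hxγ using 3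
    · simp
    · rw [hγθ, Fintype.card_fin]; ring
  · rw [Set.indicator_of_notMem hxγ, norm_zero]
    positivity
end
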